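/- For every binary positive one-pass relational algebra expression e over a ternary set variable S, there exist k ∈ ℕ, semi-algebraic sets Λ₁, Λ₂ ⊆ ℝ^{3+k}, and indices i₁, i₂ ∈ {1, …, k+3} such that for all S ⊆ ℝ³, e(S) = π_{i₁,i₂}(Λ₁ ∪ (Λ₂ ∩ (S × ℝᵏ))). -/

import Mathlib

open Set

def IsSemialgebraic {n : ℕ} (A : Set (Fin n → ℝ)) : Prop :=
  ∃ (N : ℕ) (E I : Fin N → Finset (MvPolynomial (Fin n) ℝ)),
    A = ⋃ m, {x | (∀ p ∈ E m, MvPolynomial.eval x p = 0) ∧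
                  (∀ p ∈ I m, 0 < MvPolynomial.eval x p)}

/-- Relational algebra expressions over a set variable of arity `n`;
`RAE n k` produces a `k`-ary output. Constant sets are required to be
semi-algebraic. -/
inductive RAE (n : ℕ) : ℕ → Type 1 where
  | var : RAE n n
  | const : {k : ℕ} → (C : Set (Fin k → ℝ)) → IsSemialgebraic C → RAE n k
  | union : {k : ℕ} → RAE n k → RAE n k → RAE n k
  | inter : {k : ℕ} → RAE n k → RAE n k → RAE n k
  | diff : {k : ℕ} → RAE n k → RAE n k → RAE n k
  | prod : {k₁ k₂ : ℕ} → RAE n k₁ → RAE n k₂ → RAE n (k₁ + k₂)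
  | proj : {k : ℕ} → (p : ℕ) → (Fin p → Fin k) → RAE n k → RAE n p

def RAE.eval {n : ℕ} : {k : ℕ} → RAE n k → Set (Fin n → ℝ) → Set (Fin k → ℝ)
  | _, .var, S => S
  | _, .const C _, _ => C
  | _, .union e₁ e₂, S => e₁.eval S ∪ e₂.eval S
  | _, .inter e₁ e₂, S => e₁.eval S ∩ e₂.eval S
  | _, .diff e₁ e₂, S => e₁.eval S \ e₂.eval S
  | _, .prod e₁ e₂, S =>
      {x | (fun i => x (Fin.castAdd _ i)) ∈ e₁.eval S ∧
           (fun i => x (Fin.natAdd _ i)) ∈ e₂.eval S}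
  | _, .proj _ idx e, S => (fun x i => x (idx i)) '' e.eval S

/-- The expression does not use the difference operator. -/
def RAE.Positive {n : ℕ} : {k : ℕ} → RAE n k → Prop
  | _, .var => True
  | _, .const _ _ => True
  | _, .union e₁ e₂ => e₁.Positive ∧ e₂.Positive
  | _, .inter e₁ e₂ => e₁.Positive ∧ e₂.Positive
  | _, .diff _ _ => False
  | _, .prod e₁ e₂ => e₁.Positive ∧ e₂.Positive
  | _, .proj _ _ e => e.Positive

/-- Number of occurrences of the set variable `S`. -/
def RAE.varCount {n : ℕ} : {k : ℕ} → RAE n k → ℕ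
  | _, .var => 1
  | _, .const _ _ => 0
  | _, .union e₁ e₂ => e₁.varCount + e₂.varCount
  | _, .inter e₁ e₂ => e₁.varCount + e₂.varCount
  | _, .diff e₁ e₂ => e₁.varCount + e₂.varCount
  | _, .prod e₁ e₂ => e₁.varCount + e₂.varCount
  | _, .proj _ _ e => e.varCount

/-- The expression does not use the cartesian product operator. -/
def RAE.ProductFree {n : ℕ} : {k : ℕ} → RAE n k → Prop
  | _, .var => True
  | _, .const _ _ => True
  | _, .union e₁ e₂ => e₁.ProductFree ∧ e₂.ProductFree
  | _, .inter e₁ e₂ => e₁.ProductFree ∧ e₂.ProductFree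
  | _, .diff e₁ e₂ => e₁.ProductFree ∧ e₂.ProductFree
  | _, .prod _ _ => False
  | _, .proj _ _ e => e.ProductFree

/-!
Every subexpression of `e` without `S` evaluates to a projection of a semialgebraic set, and
every subexpression containing the single occurrence of `S` to `π(Λ₁ ∪ (Λ₂ ∩ (S × ℝ^ι)))` with
`Λ₁, Λ₂` semialgebraic. As there is no difference, the induction only has to combine this
normal form with a projected semialgebraic set by union, intersection or product (pull both
back to the disjoint union of their hidden coordinates), and to project it (new output
coordinates tied to the old ones by equations). Projections stay explicit throughout, so
Tarski–Seidenberg is not needed. Finally the hidden coordinates are enumerated, and three fresh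
coordinates, equated with those carrying `S`, are put in front.
-/

/-- `IsSemialgebraic` for coordinates indexed by an arbitrary type; on `Fin n` the two agree by
definition. -/
def IsSemialgebraic' {σ : Type*} (A : Set (σ → ℝ)) : Prop :=
  ∃ (N : ℕ) (E I : Fin N → Finset (MvPolynomial σ ℝ)),
    A = ⋃ m, {x | (∀ p ∈ E m, MvPolynomial.eval x p = 0) ∧
                  (∀ p ∈ I m, 0 < MvPolynomial.eval x p)}

namespace IsSemialgebraic'

open MvPolynomial

variable {σ τ : Type*} {A B : Set (σ → ℝ)}

theorem empty : IsSemialgebraic' (∅ : Set (σ → ℝ)) :=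
  ⟨0, Fin.elim0, Fin.elim0, by simp⟩

theorem preimage_comp (g : σ → τ) (hA : IsSemialgebraic' A) :
    IsSemialgebraic' {x : τ → ℝ | x ∘ g ∈ A} := by
  classical
  obtain ⟨N, E, I, rfl⟩ := hA
  refine ⟨N, fun m => (E m).image (rename g), fun m => (I m).image (rename g), ?_⟩
  ext y
  simp [eval_rename]

theorem union (hA : IsSemialgebraic' A) (hB : IsSemialgebraic' B) :
    IsSemialgebraic' (A ∪ B) := by
  obtain ⟨N₁, E₁, I₁, rfl⟩ := hA
  obtain ⟨N₂, E₂, I₂, rfl⟩ := hB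
  refine ⟨N₁ + N₂, Fin.append E₁ E₂, Fin.append I₁ I₂, ?_⟩
  rw [← finSumFinEquiv.surjective.iUnion_comp, iUnion_sum]
  simp only [finSumFinEquiv_apply_left, finSumFinEquiv_apply_right, Fin.append_left,
    Fin.append_right]

theorem inter (hA : IsSemialgebraic' A) (hB : IsSemialgebraic' B) :
    IsSemialgebraic' (A ∩ B) := by
  classical
  obtain ⟨N₁, E₁, I₁, rfl⟩ := hA
  obtain ⟨N₂, E₂, I₂, rfl⟩ := hB
  refine ⟨N₁ * N₂, fun m => E₁ (finProdFinEquiv.symm m).1 ∪ E₂ (finProdFinEquiv.symm m).2,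
    fun m => I₁ (finProdFinEquiv.symm m).1 ∪ I₂ (finProdFinEquiv.symm m).2, ?_⟩
  rw [← finProdFinEquiv.surjective.iUnion_comp, iUnion_inter_iUnion, iUnion_prod']
  simp only [Equiv.symm_apply_apply, Finset.forall_mem_union]
  exact iUnion₂_congr fun i j => ext fun x => and_and_and_comm

end IsSemialgebraic'

theorem isSemialgebraic'_setOf_forall_eq {ι σ : Type*} [Finite ι] (f g : ι → σ) :
    IsSemialgebraic' {x : σ → ℝ | ∀ i, x (f i) = x (g i)} := by
  classical
  have := Fintype.ofFinite ι
  refine ⟨1, fun _ => Finset.univ.image fun i => .X (f i) - .X (g i), fun _ => ∅, ?_⟩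
  ext x
  simp [sub_eq_zero]

def projLeft {α ι R : Type*} (A : Set (α ⊕ ι → R)) : Set (α → R) :=
  {v | ∃ y, Sum.elim v y ∈ A}

section projLeft

variable {α β ι κ R : Type*}

theorem projLeft_eq_image (A : Set (α ⊕ ι → R)) :
    projLeft A = (fun z => z ∘ Sum.inl) '' A := by
  ext v
  constructor
  · rintro ⟨y, hy⟩
    exact ⟨_, hy, Sum.elim_comp_inl v y⟩
  · rintro ⟨z, hz, rfl⟩
    exact ⟨z ∘ Sum.inr, by rwa [Sum.elim_comp_inl_inr]⟩

theorem projLeft_union (A B : Set (α ⊕ ι → R)) :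
    projLeft (A ∪ B) = projLeft A ∪ projLeft B := by
  simp only [projLeft_eq_image, image_union]

theorem projLeft_preimage_sumMap_of_injective [Nonempty R] {f : ι → κ} (hf : f.Injective)
    (A : Set (α ⊕ ι → R)) : projLeft {z | z ∘ Sum.map id f ∈ A} = projLeft A := by
  ext v
  constructor
  · rintro ⟨y, hy⟩
    rw [mem_ofPred_eq, Sum.elim_comp_map] at hy
    exact ⟨y ∘ f, hy⟩
  · rintro ⟨y, hy⟩
    refine ⟨Function.extend f y fun _ => Classical.arbitrary R, ?_⟩
    rwa [mem_ofPred_eq, Sum.elim_comp_map, Function.extend_comp hf]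

theorem projLeft_union_projLeft [Nonempty R] (A : Set (α ⊕ ι → R)) (B : Set (α ⊕ κ → R)) :
    projLeft A ∪ projLeft B =
      projLeft ({z | z ∘ Sum.map id Sum.inl ∈ A} ∪ {z | z ∘ Sum.map id Sum.inr ∈ B}) := by
  rw [projLeft_union, projLeft_preimage_sumMap_of_injective Sum.inl_injective,
    projLeft_preimage_sumMap_of_injective Sum.inr_injective]

theorem projLeft_inter_projLeft (A : Set (α ⊕ ι → R)) (B : Set (α ⊕ κ → R)) :
    projLeft A ∩ projLeft B =
      projLeft ({z | z ∘ Sum.map id Sum.inl ∈ A} ∩ {z | z ∘ Sum.map id Sum.inr ∈ B}) := by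
  ext v
  constructor
  · rintro ⟨⟨y₁, hy₁⟩, ⟨y₂, hy₂⟩⟩
    refine ⟨Sum.elim y₁ y₂, ?_, ?_⟩ <;> simpa [mem_ofPred_eq, Sum.elim_comp_map]
  · rintro ⟨y, hy₁, hy₂⟩
    rw [mem_ofPred_eq, Sum.elim_comp_map] at hy₁ hy₂
    exact ⟨⟨_, hy₁⟩, ⟨_, hy₂⟩⟩

theorem preimage_projLeft (g : α → β) (A : Set (α ⊕ ι → R)) :
    {v | v ∘ g ∈ projLeft A} = projLeft {z | z ∘ Sum.map g id ∈ A} := by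
  ext v
  simp only [projLeft, mem_ofPred_eq, Sum.elim_comp_map, Function.comp_id]

theorem image_projLeft (σ : β → α) (A : Set (α ⊕ ι → R)) :
    (fun v => v ∘ σ) '' projLeft A =
      projLeft ({z : β ⊕ (α ⊕ ι) → R | z ∘ Sum.inr ∈ A} ∩
        {z | ∀ b, z (Sum.inl b) = z (Sum.inr (Sum.inl (σ b)))}) := by
  ext w
  constructor
  · rintro ⟨v, ⟨y, hy⟩, rfl⟩
    exact ⟨Sum.elim v y, by simpa using hy, fun b => rfl⟩
  · rintro ⟨z, hz, hσ⟩
    refine ⟨z ∘ Sum.inl, ⟨z ∘ Sum.inr, ?_⟩, funext fun b => (hσ b).symm⟩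
    simpa using hz

end projLeft

def IsProjSemialgebraic {α : Type*} (A : Set (α → ℝ)) : Prop :=
  ∃ (ι : Type) (_ : Finite ι) (B : Set (α ⊕ ι → ℝ)), IsSemialgebraic' B ∧ A = projLeft B

namespace IsProjSemialgebraic

variable {α β : Type} {A A' : Set (α → ℝ)}

theorem of_isSemialgebraic' (hA : IsSemialgebraic' A) : IsProjSemialgebraic A :=
  ⟨Empty, inferInstance, {z | z ∘ Sum.inl ∈ A}, hA.preimage_comp _,
    ext fun _ => ⟨fun hv => ⟨Empty.elim, hv⟩, fun ⟨_, hv⟩ => hv⟩⟩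

theorem union (hA : IsProjSemialgebraic A) (hA' : IsProjSemialgebraic A') :
    IsProjSemialgebraic (A ∪ A') := by
  obtain ⟨ι, _, B, hB, rfl⟩ := hA
  obtain ⟨κ, _, B', hB', rfl⟩ := hA'
  exact ⟨ι ⊕ κ, inferInstance, _, (hB.preimage_comp _).union (hB'.preimage_comp _),
    projLeft_union_projLeft B B'⟩

theorem inter (hA : IsProjSemialgebraic A) (hA' : IsProjSemialgebraic A') :
    IsProjSemialgebraic (A ∩ A') := by
  obtain ⟨ι, _, B, hB, rfl⟩ := hA
  obtain ⟨κ, _, B', hB', rfl⟩ := hA'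
  exact ⟨ι ⊕ κ, inferInstance, _, (hB.preimage_comp _).inter (hB'.preimage_comp _),
    projLeft_inter_projLeft B B'⟩

theorem preimage_comp (g : α → β) (hA : IsProjSemialgebraic A) :
    IsProjSemialgebraic {v : β → ℝ | v ∘ g ∈ A} := by
  obtain ⟨ι, _, B, hB, rfl⟩ := hA
  exact ⟨ι, inferInstance, _, hB.preimage_comp _, preimage_projLeft g B⟩

theorem image_comp [Finite α] [Finite β] (σ : β → α) (hA : IsProjSemialgebraic A) :
    IsProjSemialgebraic ((fun v => v ∘ σ) '' A) := by
  obtain ⟨ι, _, B, hB, rfl⟩ := hA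
  exact ⟨α ⊕ ι, inferInstance, _,
    (hB.preimage_comp _).inter (isSemialgebraic'_setOf_forall_eq _ _), image_projLeft σ B⟩

end IsProjSemialgebraic

def IsOnePassSemialgebraic {β γ : Type*} (T : Set (β → ℝ) → Set (γ → ℝ)) : Prop :=
  ∃ (Λ₁ Λ₂ : Set (γ → ℝ)) (j : β → γ), IsSemialgebraic' Λ₁ ∧ IsSemialgebraic' Λ₂ ∧
    T = fun S => Λ₁ ∪ (Λ₂ ∩ {z | z ∘ j ∈ S})

namespace IsOnePassSemialgebraic

variable {β γ γ' : Type*} {T : Set (β → ℝ) → Set (γ → ℝ)} {B : Set (γ → ℝ)}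

theorem const (j : β → γ) (hB : IsSemialgebraic' B) :
    IsOnePassSemialgebraic fun _ : Set (β → ℝ) => B :=
  ⟨B, ∅, j, hB, .empty, by simp⟩

theorem preimage_comp (h : γ → γ') (hT : IsOnePassSemialgebraic T) :
    IsOnePassSemialgebraic fun S => {z : γ' → ℝ | z ∘ h ∈ T S} := by
  obtain ⟨Λ₁, Λ₂, j, h₁, h₂, rfl⟩ := hT
  exact ⟨_, _, h ∘ j, h₁.preimage_comp h, h₂.preimage_comp h, rfl⟩

theorem union (hT : IsOnePassSemialgebraic T) (hB : IsSemialgebraic' B) :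
    IsOnePassSemialgebraic fun S => T S ∪ B := by
  obtain ⟨Λ₁, Λ₂, j, h₁, h₂, rfl⟩ := hT
  exact ⟨Λ₁ ∪ B, Λ₂, j, h₁.union hB, h₂, funext fun S => union_right_comm _ _ _⟩

theorem inter (hT : IsOnePassSemialgebraic T) (hB : IsSemialgebraic' B) :
    IsOnePassSemialgebraic fun S => T S ∩ B := by
  obtain ⟨Λ₁, Λ₂, j, h₁, h₂, rfl⟩ := hT
  exact ⟨Λ₁ ∩ B, Λ₂ ∩ B, j, h₁.inter hB, h₂.inter hB,
    funext fun S => by rw [union_inter_distrib_right, inter_right_comm]⟩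

end IsOnePassSemialgebraic

def HasOnePassForm {α β : Type*} (F : Set (β → ℝ) → Set (α → ℝ)) : Prop :=
  ∃ (ι : Type) (_ : Finite ι) (T : Set (β → ℝ) → Set (α ⊕ ι → ℝ)),
    IsOnePassSemialgebraic T ∧ F = fun S => projLeft (T S)

theorem hasOnePassForm_id {β : Type} [Finite β] : HasOnePassForm fun S : Set (β → ℝ) => S := by
  refine ⟨β, inferInstance, _,
    ⟨∅, _, Sum.inr, .empty, isSemialgebraic'_setOf_forall_eq Sum.inl Sum.inr, rfl⟩,
    funext fun S => ext fun v => ⟨fun hv => ⟨v, Or.inr ⟨fun _ => rfl, hv⟩⟩, ?_⟩⟩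
  rintro ⟨y, hy | ⟨hvy, hy⟩⟩
  · exact hy.elim
  · rwa [show v = y from funext hvy]

namespace HasOnePassForm

variable {α α' β : Type} {F : Set (β → ℝ) → Set (α → ℝ)} {A : Set (α → ℝ)}

-- The extra hidden coordinates indexed by `β` only give the unused copy of `S` a place.
theorem const [Finite β] (hA : IsProjSemialgebraic A) :
    HasOnePassForm fun _ : Set (β → ℝ) => A := by
  obtain ⟨ι, _, B, hB, rfl⟩ := hA
  exact ⟨ι ⊕ β, inferInstance, _,
    .const (Sum.inr ∘ Sum.inr) (hB.preimage_comp (Sum.map id Sum.inl)),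
    funext fun _ => (projLeft_preimage_sumMap_of_injective Sum.inl_injective B).symm⟩

theorem union_const (hF : HasOnePassForm F) (hA : IsProjSemialgebraic A) :
    HasOnePassForm fun S => F S ∪ A := by
  obtain ⟨ι, _, T, hT, rfl⟩ := hF
  obtain ⟨κ, _, B, hB, rfl⟩ := hA
  exact ⟨ι ⊕ κ, inferInstance, _, (hT.preimage_comp _).union (hB.preimage_comp _),
    funext fun S => projLeft_union_projLeft (T S) B⟩

theorem inter_const (hF : HasOnePassForm F) (hA : IsProjSemialgebraic A) :
    HasOnePassForm fun S => F S ∩ A := by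
  obtain ⟨ι, _, T, hT, rfl⟩ := hF
  obtain ⟨κ, _, B, hB, rfl⟩ := hA
  exact ⟨ι ⊕ κ, inferInstance, _, (hT.preimage_comp _).inter (hB.preimage_comp _),
    funext fun S => projLeft_inter_projLeft (T S) B⟩

theorem const_union (hF : HasOnePassForm F) (hA : IsProjSemialgebraic A) :
    HasOnePassForm fun S => A ∪ F S := by
  simpa only [union_comm] using hF.union_const hA

theorem const_inter (hF : HasOnePassForm F) (hA : IsProjSemialgebraic A) :
    HasOnePassForm fun S => A ∩ F S := by
  simpa only [inter_comm] using hF.inter_const hA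

theorem preimage_comp (g : α → α') (hF : HasOnePassForm F) :
    HasOnePassForm fun S => {v : α' → ℝ | v ∘ g ∈ F S} := by
  obtain ⟨ι, _, T, hT, rfl⟩ := hF
  exact ⟨ι, inferInstance, _, hT.preimage_comp (Sum.map g id),
    funext fun S => preimage_projLeft g (T S)⟩

theorem image_comp [Finite α] [Finite α'] (σ : α' → α) (hF : HasOnePassForm F) :
    HasOnePassForm fun S => (fun v => v ∘ σ) '' F S := by
  obtain ⟨ι, _, T, hT, rfl⟩ := hF
  exact ⟨α ⊕ ι, inferInstance, _,
    (hT.preimage_comp Sum.inr).inter (isSemialgebraic'_setOf_forall_eq _ _),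
    funext fun S => image_projLeft σ (T S)⟩

end HasOnePassForm

theorem HasOnePassForm.exists_fin {n : ℕ} {α : Type} [Finite α]
    {F : Set (Fin n → ℝ) → Set (α → ℝ)} (hF : HasOnePassForm F) :
    ∃ (k : ℕ) (Λ₁ Λ₂ : Set (Fin (n + k) → ℝ)) (out : α → Fin (n + k)),
      IsSemialgebraic Λ₁ ∧ IsSemialgebraic Λ₂ ∧
      ∀ S, F S = (fun x => x ∘ out) '' (Λ₁ ∪ (Λ₂ ∩ {x | x ∘ Fin.castAdd k ∈ S})) := by
  obtain ⟨ι, _, _, ⟨Λ₁, Λ₂, j, h₁, h₂, rfl⟩, rfl⟩ := hF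
  set e := Finite.equivFin (α ⊕ ι)
  set ρ : α ⊕ ι → Fin (n + Nat.card (α ⊕ ι)) := Fin.natAdd n ∘ e
  have lift (z : α ⊕ ι → ℝ) :
      ∃ x : Fin (n + Nat.card (α ⊕ ι)) → ℝ, x ∘ ρ = z ∧ x ∘ Fin.castAdd _ = z ∘ j :=
    ⟨Fin.append (z ∘ j) (z ∘ e.symm), by ext i; simp [ρ], by ext i; simp⟩
  refine ⟨_, {x | x ∘ ρ ∈ Λ₁}, {x | x ∘ ρ ∈ Λ₂} ∩ {x | ∀ i, x (Fin.castAdd _ i) = x (ρ (j i))},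
    ρ ∘ Sum.inl, h₁.preimage_comp ρ,
    (h₂.preimage_comp ρ).inter (isSemialgebraic'_setOf_forall_eq _ _), fun S => ?_⟩
  beta_reduce
  rw [projLeft_eq_image, show (fun x => x ∘ (ρ ∘ Sum.inl)) =
    (fun z => z ∘ Sum.inl) ∘ fun x : Fin (n + Nat.card (α ⊕ ι)) → ℝ => x ∘ ρ from rfl,
    Set.image_comp]
  congr 1
  ext z
  constructor
  · intro hz
    obtain ⟨x, rfl, hcast⟩ := lift z
    refine ⟨x, ?_, rfl⟩
    rcases hz with hz | ⟨hz, hzS⟩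
    · exact Or.inl hz
    · exact Or.inr ⟨⟨hz, congrFun hcast⟩, by rwa [mem_ofPred_eq, hcast]⟩
  · rintro ⟨x, hx | ⟨⟨hx, hxj⟩, hxS⟩, rfl⟩
    · exact Or.inl hx
    · have hcast : x ∘ Fin.castAdd _ = x ∘ ρ ∘ j := funext hxj
      exact Or.inr ⟨hx, by rwa [mem_ofPred_eq, hcast] at hxS⟩

namespace RAE

variable {n : ℕ}

theorem eval_prod {k₁ k₂ : ℕ} (e₁ : RAE n k₁) (e₂ : RAE n k₂) :
    (e₁.prod e₂).eval =
      fun S => {x | x ∘ Fin.castAdd k₂ ∈ e₁.eval S} ∩ {x | x ∘ Fin.natAdd k₁ ∈ e₂.eval S} :=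
  rfl

theorem exists_eval_eq_const {m : ℕ} (e : RAE n m) (hpos : e.Positive) (h0 : e.varCount = 0) :
    ∃ A, IsProjSemialgebraic A ∧ e.eval = fun _ => A := by
  induction e with
  | var => exact absurd h0 one_ne_zero
  | const C hC => exact ⟨C, .of_isSemialgebraic' hC, rfl⟩
  | union e₁ e₂ ih₁ ih₂ =>
    obtain ⟨h₁, h₂⟩ := Nat.add_eq_zero_iff.mp h0
    obtain ⟨A₁, hA₁, he₁⟩ := ih₁ hpos.1 h₁
    obtain ⟨A₂, hA₂, he₂⟩ := ih₂ hpos.2 h₂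
    exact ⟨A₁ ∪ A₂, hA₁.union hA₂, by simp only [eval, he₁, he₂]⟩
  | inter e₁ e₂ ih₁ ih₂ =>
    obtain ⟨h₁, h₂⟩ := Nat.add_eq_zero_iff.mp h0
    obtain ⟨A₁, hA₁, he₁⟩ := ih₁ hpos.1 h₁
    obtain ⟨A₂, hA₂, he₂⟩ := ih₂ hpos.2 h₂
    exact ⟨A₁ ∩ A₂, hA₁.inter hA₂, by simp only [eval, he₁, he₂]⟩
  | diff => exact hpos.elim
  | @prod k₁ k₂ e₁ e₂ ih₁ ih₂ =>
    obtain ⟨h₁, h₂⟩ := Nat.add_eq_zero_iff.mp h0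
    obtain ⟨A₁, hA₁, he₁⟩ := ih₁ hpos.1 h₁
    obtain ⟨A₂, hA₂, he₂⟩ := ih₂ hpos.2 h₂
    exact ⟨_, (hA₁.preimage_comp (Fin.castAdd k₂)).inter (hA₂.preimage_comp (Fin.natAdd k₁)),
      by rw [eval_prod, he₁, he₂]⟩
  | proj p σ e ih =>
    obtain ⟨A, hA, he⟩ := ih hpos h0
    exact ⟨_, hA.image_comp σ, by simp only [eval, he]; rfl⟩

theorem hasOnePassForm_binary {k₁ k₂ m : ℕ} {e₁ : RAE n k₁} {e₂ : RAE n k₂}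
    (op : Set (Fin k₁ → ℝ) → Set (Fin k₂ → ℝ) → Set (Fin m → ℝ))
    (hpos₁ : e₁.Positive) (hpos₂ : e₂.Positive) (h1 : e₁.varCount + e₂.varCount ≤ 1)
    (ih₁ : e₁.varCount ≤ 1 → HasOnePassForm e₁.eval)
    (ih₂ : e₂.varCount ≤ 1 → HasOnePassForm e₂.eval)
    (hleft : ∀ {F : Set (Fin n → ℝ) → Set (Fin k₁ → ℝ)} {A}, HasOnePassForm F →
      IsProjSemialgebraic A → HasOnePassForm fun S => op (F S) A)
    (hright : ∀ {F : Set (Fin n → ℝ) → Set (Fin k₂ → ℝ)} {A}, HasOnePassForm F →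
      IsProjSemialgebraic A → HasOnePassForm fun S => op A (F S)) :
    HasOnePassForm fun S => op (e₁.eval S) (e₂.eval S) := by
  obtain h₂ | h₁ : e₂.varCount = 0 ∨ e₁.varCount = 0 := by omega
  · obtain ⟨A, hA, he⟩ := exists_eval_eq_const e₂ hpos₂ h₂
    rw [he]
    exact hleft (ih₁ (by omega)) hA
  · obtain ⟨A, hA, he⟩ := exists_eval_eq_const e₁ hpos₁ h₁
    rw [he]
    exact hright (ih₂ (by omega)) hA

theorem hasOnePassForm_eval {m : ℕ} (e : RAE n m) (hpos : e.Positive) (h1 : e.varCount ≤ 1) :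
    HasOnePassForm e.eval := by
  induction e with
  | var => exact hasOnePassForm_id
  | const C hC => exact .const (.of_isSemialgebraic' hC)
  | union e₁ e₂ ih₁ ih₂ =>
    exact hasOnePassForm_binary (· ∪ ·) hpos.1 hpos.2 h1 (ih₁ hpos.1) (ih₂ hpos.2)
      HasOnePassForm.union_const HasOnePassForm.const_union
  | inter e₁ e₂ ih₁ ih₂ =>
    exact hasOnePassForm_binary (· ∩ ·) hpos.1 hpos.2 h1 (ih₁ hpos.1) (ih₂ hpos.2)
      HasOnePassForm.inter_const HasOnePassForm.const_inter
  | diff => exact hpos.elim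
  | prod e₁ e₂ ih₁ ih₂ =>
    rw [eval_prod]
    exact hasOnePassForm_binary
      (fun X Y => {x | x ∘ Fin.castAdd _ ∈ X} ∩ {x | x ∘ Fin.natAdd _ ∈ Y}) hpos.1 hpos.2 h1 (ih₁ hpos.1) (ih₂ hpos.2)
      (fun hF hA => (hF.preimage_comp _).inter_const (hA.preimage_comp _))
      (fun hF hA => (hF.preimage_comp _).const_inter (hA.preimage_comp _))
  | proj p σ e ih => exact (ih hpos h1).image_comp σ

end RAE

theorem stmt10 (e : RAE 3 2) (hpos : e.Positive) (hone : e.varCount = 1) :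
    ∃ (k : ℕ) (Λ₁ Λ₂ : Set (Fin (3 + k) → ℝ)),
      IsSemialgebraic Λ₁ ∧ IsSemialgebraic Λ₂ ∧
      ∃ i₁ i₂ : Fin (3 + k), ∀ S : Set (Fin 3 → ℝ),
        e.eval S =
          (fun x : Fin (3 + k) → ℝ => ![x i₁, x i₂]) ''
            (Λ₁ ∪ (Λ₂ ∩ {x | (fun i => x (Fin.castAdd k i)) ∈ S})) := by
  obtain ⟨k, Λ₁, Λ₂, out, h₁, h₂, he⟩ := (e.hasOnePassForm_eval hpos hone.le).exists_fin
  refine ⟨k, Λ₁, Λ₂, h₁, h₂, out 0, out 1, fun S => ?_⟩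
  have hout : (fun x : Fin (3 + k) → ℝ => ![x (out 0), x (out 1)]) = fun x => x ∘ out := by
    funext x i
    fin_cases i <;> rfl
  rw [hout]
  exact he S
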